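/- arXiv:2010.05415 — 6 statements merged into one kernel-verified Lean document; each statement's English description precedes it below -/
import Mathlib

section
/- For integers m and n with n ≥ 1, the von Sterneck number equals the Ramanujan sum: (φ(n)/φ(n/gcd(m,n))) · μ(n/gcd(m,n)) = c_n(m), where φ is Euler's totient function and μ is the Möbius function. -/
open Finset ArithmeticFunction
open scoped ArithmeticFunction.Moebius

/-- The Ramanujan sum `c_n(m) = ∑_{1 ≤ j ≤ n, gcd(j,n)=1} exp(2πi·jm/n)`. -/
noncomputable def ramanujanSum (n : ℕ) (m : ℤ) : ℂ :=
  ∑ j ∈ (Finset.Icc 1 n).filter (fun j => Nat.gcd j n = 1),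
    Complex.exp (2 * Real.pi * Complex.I * (j : ℂ) * (m : ℂ) / (n : ℂ))

/-- Standard additive character of `ZMod k`, via the minimal representative. -/
noncomputable def EE (k : ℕ) (x : ZMod k) : ℂ :=
  Complex.exp (2 * Real.pi * Complex.I * (x.val : ℂ) / k)

lemma EE_intCast (k : ℕ) [NeZero k] (a : ℤ) :
    EE k ((a : ZMod k)) = Complex.exp (2 * Real.pi * Complex.I * (a : ℂ) / k) := by
  have hk : (k : ℂ) ≠ 0 := by exact_mod_cast (NeZero.ne k)
  have hval : (((a : ZMod k).val : ℤ) : ℂ) = ((a % k : ℤ) : ℂ) := by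
    rw [ZMod.val_intCast]
  have ha : a = k * (a / k) + a % k := (Int.mul_ediv_add_emod a k).symm
  rw [EE]
  have h1 : ((a : ZMod k).val : ℂ) = ((a % k : ℤ) : ℂ) := by
    exact_mod_cast hval
  rw [h1]
  conv_rhs => rw [ha]
  push_cast
  rw [show 2 * Real.pi * Complex.I * ((k : ℂ) * ((a/k : ℤ) : ℂ) + ((a % k : ℤ) : ℂ)) / k
      = ((a/k : ℤ) : ℂ) * (2 * Real.pi * Complex.I)
        + 2 * Real.pi * Complex.I * ((a % k : ℤ) : ℂ) / k by field_simp]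
  rw [Complex.exp_add, Complex.exp_int_mul_two_pi_mul_I, one_mul]

/-- Sum over coprime residues in `[1, n]` equals sum over units of `ZMod n`. -/
lemma sum_coprime_eq_sum_units (n : ℕ) [NeZero n] (h : ZMod n → ℂ) :
    ∑ j ∈ (Finset.Icc 1 n).filter (fun j => Nat.gcd j n = 1), h (j : ZMod n)
      = ∑ u : (ZMod n)ˣ, h ↑u := by
  have hn : n ≠ 0 := NeZero.ne n
  refine Finset.sum_bij' (i := fun j hj => ZMod.unitOfCoprime j ?_)
    (j := fun u _ => if (u : ZMod n).val = 0 then n else (u : ZMod n).val)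
    ?_ ?_ ?_ ?_ ?_
  · exact (mem_filter.mp hj).2
  · intro a ha; exact mem_univ _
  · intro u _
    rcases eq_or_ne (u : ZMod n).val 0 with h0 | h0
    · simp only [h0, if_true]
      have hcop := ZMod.val_coe_unit_coprime u
      rw [h0] at hcop
      have hn1 : n = 1 := by simpa [Nat.coprime_zero_left] using hcop
      subst hn1
      simp
    · simp only [h0, if_false]
      have hlt : (u : ZMod n).val < n := ZMod.val_lt _
      have hcop := ZMod.val_coe_unit_coprime u
      refine mem_filter.mpr ⟨mem_Icc.mpr ⟨Nat.one_le_iff_ne_zero.mpr h0, le_of_lt hlt⟩, hcop⟩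
  · intro a ha
    have hmem := mem_filter.mp ha
    have hIcc := mem_Icc.mp hmem.1
    have hcoe : ((ZMod.unitOfCoprime a hmem.2 : (ZMod n)ˣ) : ZMod n) = (a : ZMod n) :=
      ZMod.coe_unitOfCoprime a hmem.2
    rw [hcoe, ZMod.val_natCast]
    rcases lt_or_eq_of_le hIcc.2 with hlt | heq
    · rw [Nat.mod_eq_of_lt hlt]
      have : a ≠ 0 := Nat.one_le_iff_ne_zero.mp hIcc.1
      simp [this]
    · subst heq; simp
  · intro u _
    apply Units.ext
    rw [ZMod.coe_unitOfCoprime]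
    rcases eq_or_ne (u : ZMod n).val 0 with h0 | h0
    · simp only [h0, if_true, ZMod.natCast_self]
      exact ((ZMod.val_eq_zero _).mp h0).symm
    · simp only [h0, if_false]
      exact ZMod.natCast_rightInverse _
  · intro a ha
    rw [ZMod.coe_unitOfCoprime]

/-- Summing a function through a surjective hom of finite groups. -/
lemma exists_sum_comp {G H : Type*} [Group G] [Group H] [Fintype G] [Fintype H]
    [DecidableEq H] (π : G →* H) (hs : Function.Surjective π) :
    ∃ c : ℕ, c * Fintype.card H = Fintype.card G ∧
      ∀ F : H → ℂ, ∑ g : G, F (π g) = (c : ℂ) * ∑ h : H, F h := by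
  classical
  set c : ℕ := (Finset.univ.filter (fun g : G => π g = 1)).card with hc
  have hfib : ∀ v : H, (Finset.univ.filter (fun g : G => π g = v)).card = c := by
    intro v
    obtain ⟨g0, hg0⟩ := hs v
    refine Finset.card_bij' (i := fun x _ => x * g0⁻¹) (j := fun y _ => y * g0) ?_ ?_ ?_ ?_
    · intro x hx
      have hx' := (mem_filter.mp hx).2
      refine mem_filter.mpr ⟨mem_univ _, ?_⟩
      rw [map_mul, map_inv, hx', hg0, mul_inv_cancel]
    · intro y hy
      have hy' := (mem_filter.mp hy).2
      refine mem_filter.mpr ⟨mem_univ _, ?_⟩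
      rw [map_mul, hy', hg0, one_mul]
    · intro x _; group
    · intro y _; group
  have hcard : c * Fintype.card H = Fintype.card G := by
    have := Finset.card_eq_sum_card_fiberwise
      (s := (Finset.univ : Finset G)) (t := (Finset.univ : Finset H)) (f := fun g => π g)
      (fun x _ => mem_univ _)
    rw [← Finset.card_univ (α := G), this,
      Finset.sum_congr rfl (fun v _ => hfib v), Finset.sum_const, smul_eq_mul,
      Finset.card_univ, mul_comm]
  refine ⟨c, hcard, fun F => ?_⟩
  rw [← Finset.sum_fiberwise (Finset.univ : Finset G) (fun g => π g) (fun g => F (π g))]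
  rw [Finset.mul_sum]
  refine Finset.sum_congr rfl (fun v _ => ?_)
  have : ∀ g ∈ Finset.univ.filter (fun g : G => π g = v), F (π g) = F v := by
    intro g hg; rw [(mem_filter.mp hg).2]
  rw [Finset.sum_congr rfl this, Finset.sum_const, hfib v, nsmul_eq_mul]

lemma sum_moebius_divisors (N : ℕ) :
    ∑ d ∈ N.divisors, ((μ d : ℤ) : ℂ) = if N = 1 then 1 else 0 := by
  have h := congrFun (congrArg (fun f : ArithmeticFunction ℤ => (f : ℕ → ℤ))
    ArithmeticFunction.moebius_mul_coe_zeta) N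
  simp only [ArithmeticFunction.coe_mul_zeta_apply, ArithmeticFunction.one_apply] at h
  exact_mod_cast h

/-- Ramanujan sum at `m = 1` is the Möbius function. -/
lemma ramanujanSum_one (k : ℕ) (hk : k ≠ 0) : ramanujanSum k 1 = ((μ k : ℤ) : ℂ) := by
  have hkpos : 0 < k := Nat.pos_of_ne_zero hk
  set zz := Complex.exp (2 * Real.pi * Complex.I / k) with hzzdef
  have hzz : IsPrimitiveRoot zz k := Complex.isPrimitiveRoot_exp k hk
  have hsummand : ∀ j : ℕ,
      Complex.exp (2 * Real.pi * Complex.I * (j : ℂ) * (((1 : ℤ) : ℂ)) / k) = zz ^ j := by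
    intro j
    rw [hzzdef, ← Complex.exp_nat_mul]
    congr 1
    push_cast
    ring
  rw [ramanujanSum, Finset.sum_congr rfl (fun j _ => hsummand j), Finset.sum_filter]
  have hind : ∀ j, (if Nat.gcd j k = 1 then zz ^ j else 0)
      = ∑ d ∈ k.divisors, (if d ∣ j then ((μ d : ℤ) : ℂ) else 0) * zz ^ j := by
    intro j
    rw [← Finset.sum_mul, ← Finset.sum_filter]
    have hset : k.divisors.filter (· ∣ j) = (Nat.gcd j k).divisors := by
      ext d
      simp only [Nat.mem_divisors, Finset.mem_filter, Nat.dvd_gcd_iff]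
      constructor
      · rintro ⟨⟨h1, _⟩, h3⟩
        exact ⟨⟨h3, h1⟩, fun hgc => hk (Nat.eq_zero_of_gcd_eq_zero_right hgc)⟩
      · rintro ⟨⟨h1, h2⟩, _⟩
        exact ⟨⟨h2, hk⟩, h1⟩
    rw [hset, sum_moebius_divisors]
    split_ifs <;> simp
  rw [Finset.sum_congr rfl (fun j _ => hind j), Finset.sum_comm]
  have hinner : ∀ d ∈ k.divisors,
      ∑ j ∈ Finset.Icc 1 k, (if d ∣ j then ((μ d : ℤ) : ℂ) else 0) * zz ^ j
        = ((μ d : ℤ) : ℂ) * (if d = k then 1 else 0) := by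
    intro d hd
    obtain ⟨hdk, _⟩ := Nat.mem_divisors.mp hd
    have hd0 : d ≠ 0 := by
      rintro rfl
      exact hk (Nat.eq_zero_of_zero_dvd hdk)
    have hdpos : 0 < d := Nat.pos_of_ne_zero hd0
    set K := k / d with hKdef
    have hkdK : k = d * K := (Nat.mul_div_cancel' hdk).symm
    have hKpos : 0 < K := Nat.div_pos (Nat.le_of_dvd hkpos hdk) hdpos
    have step1 : ∀ j, (if d ∣ j then ((μ d : ℤ) : ℂ) else 0) * zz ^ j
        = if d ∣ j then ((μ d : ℤ) : ℂ) * zz ^ j else 0 := by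
      intro j; rw [ite_mul, zero_mul]
    rw [Finset.sum_congr rfl (fun j _ => step1 j), ← Finset.sum_filter, ← Finset.mul_sum]
    congr 1
    have hre : ∑ j ∈ (Finset.Icc 1 k).filter (fun j => d ∣ j), zz ^ j
        = ∑ t ∈ Finset.Icc 1 K, (zz ^ d) ^ t := by
      refine Finset.sum_bij' (i := fun j _ => j / d) (j := fun t _ => d * t) ?_ ?_ ?_ ?_ ?_
      · intro j hj
        obtain ⟨hjIcc, hdj⟩ := mem_filter.mp hj
        obtain ⟨hj1, hjk⟩ := mem_Icc.mp hjIcc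
        refine mem_Icc.mpr ⟨?_, Nat.div_le_div_right hjk⟩
        exact Nat.one_le_div_iff hdpos |>.mpr (Nat.le_of_dvd (Nat.lt_of_lt_of_le Nat.zero_lt_one hj1) hdj)
      · intro t ht
        obtain ⟨ht1, htK⟩ := mem_Icc.mp ht
        refine mem_filter.mpr ⟨mem_Icc.mpr ⟨?_, ?_⟩, dvd_mul_right d t⟩
        · exact Nat.one_le_iff_ne_zero.mpr (Nat.mul_ne_zero hd0 (Nat.one_le_iff_ne_zero.mp ht1))
        · calc d * t ≤ d * K := Nat.mul_le_mul_left d htK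
            _ = k := hkdK.symm
      · intro j hj
        exact Nat.mul_div_cancel' (mem_filter.mp hj).2
      · intro t _
        exact Nat.mul_div_cancel_left t hdpos
      · intro j hj
        rw [← pow_mul, Nat.mul_div_cancel' (mem_filter.mp hj).2]
    rw [hre]
    have hw : IsPrimitiveRoot (zz ^ d) K := hzz.pow hkpos hkdK
    rcases eq_or_lt_of_le (Nat.one_le_iff_ne_zero.mpr (Nat.pos_iff_ne_zero.mp hKpos)) with hK1 | hK1
    · have hdk' : d = k := by rw [hkdK, ← hK1, mul_one]
      rw [← hK1]
      simp only [hdk', if_true]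
      simp only [Finset.Icc_self, Finset.sum_singleton, pow_one]
      exact hzz.pow_eq_one
    · have hdk' : d ≠ k := by
        intro hdk''
        rw [hdk''] at hkdK
        nlinarith
      rw [if_neg hdk']
      rw [← Finset.Ico_add_one_right_eq_Icc, Finset.sum_Ico_eq_sum_range,
        show K + 1 - 1 = K from rfl]
      have : ∀ i, (zz ^ d) ^ (1 + i) = (zz ^ d) * ((zz ^ d) ^ i) := by
        intro i; rw [pow_add, pow_one]
      rw [Finset.sum_congr rfl (fun i _ => this i), ← Finset.mul_sum,
        hw.geom_sum_eq_zero hK1, mul_zero]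
  rw [Finset.sum_congr rfl hinner]
  have : ∀ d, ((μ d : ℤ) : ℂ) * (if d = k then 1 else 0)
      = if d = k then ((μ d : ℤ) : ℂ) else 0 := by
    intro d; rw [mul_ite, mul_one, mul_zero]
  rw [Finset.sum_congr rfl (fun d _ => this d), Finset.sum_ite_eq' k.divisors k,
    if_pos (Nat.mem_divisors_self k hk)]

/-- **Kluyver.** The von Sterneck number equals the Ramanujan sum:
`(φ(n)/φ(n/gcd(m,n))) · μ(n/gcd(m,n)) = c_n(m)`. -/
theorem vonSterneck_eq_ramanujanSum (m : ℤ) (n : ℕ) (hn : 1 ≤ n) :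
    (Nat.totient n : ℂ) / (Nat.totient (n / Int.gcd m n) : ℂ) *
      (ArithmeticFunction.moebius (n / Int.gcd m n) : ℂ) = ramanujanSum n m := by
  have hn0 : n ≠ 0 := by omega
  haveI : NeZero n := ⟨hn0⟩
  set g : ℕ := Int.gcd m n with hgdef
  have hg0 : 0 < g := by
    rw [hgdef, Int.gcd]
    exact Nat.gcd_pos_of_pos_right _ (by simpa using Nat.pos_of_ne_zero hn0)
  set k : ℕ := n / g with hkdef
  have hgdvd : g ∣ n := by
    have h1 : (g : ℤ) ∣ (n : ℤ) := Int.gcd_dvd_right m n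
    exact_mod_cast h1
  have hnk : n = g * k := (Nat.mul_div_cancel' hgdvd).symm
  have hk0 : k ≠ 0 := by
    rintro h
    rw [h, mul_zero] at hnk
    exact hn0 hnk
  haveI : NeZero k := ⟨hk0⟩
  have hkdvd : k ∣ n := ⟨g, by rw [hnk]; ring⟩
  set m' : ℤ := m / g with hm'def
  have hgm : (g : ℤ) ∣ m := Int.gcd_dvd_left m n
  have hm : m = g * m' := (Int.mul_ediv_cancel' hgm).symm
  have hcop : Int.gcd m' k = 1 := by
    have h1 : (n : ℤ) / (g : ℤ) = (k : ℤ) := by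
      rw [hnk]
      push_cast
      rw [Int.mul_ediv_cancel_left _ (by exact_mod_cast hg0.ne')]
    have h2 := Int.gcd_div_gcd_div_gcd (i := m) (j := (n : ℤ)) (by exact_mod_cast hg0)
    rw [← hgdef] at h2
    rw [h1] at h2
    exact h2
  have hnC : (n : ℂ) ≠ 0 := Nat.cast_ne_zero.mpr hn0
  have hkC : (k : ℂ) ≠ 0 := Nat.cast_ne_zero.mpr hk0
  have key : ramanujanSum n m
      = ∑ u : (ZMod n)ˣ, EE k ((ZMod.castHom hkdvd (ZMod k)) ((u : (ZMod n)ˣ) : ZMod n)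
          * ((m' : ZMod k))) := by
    rw [ramanujanSum, ← sum_coprime_eq_sum_units n
      (fun x => EE k ((ZMod.castHom hkdvd (ZMod k)) x * ((m' : ZMod k))))]
    refine Finset.sum_congr rfl (fun j hj => ?_)
    have h1 : ((ZMod.castHom hkdvd (ZMod k)) ((j : ℕ) : ZMod n)) = ((j : ℕ) : ZMod k) :=
      map_natCast _ j
    rw [h1]
    have h2 : ((j : ℕ) : ZMod k) * ((m' : ZMod k)) = (((j : ℤ) * m' : ℤ) : ZMod k) := by
      push_cast
      ring
    rw [h2, EE_intCast]
    congr 1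
    rw [div_eq_div_iff hnC hkC]
    have hmC : (m : ℂ) = (g : ℂ) * (m' : ℂ) := by exact_mod_cast congrArg (Int.cast : ℤ → ℂ) hm
    have hnC2 : (n : ℂ) = (g : ℂ) * (k : ℂ) := by exact_mod_cast congrArg (Nat.cast : ℕ → ℂ) hnk
    rw [hmC, hnC2]
    push_cast
    ring
  obtain ⟨c, hcard, hsum⟩ := exists_sum_comp (ZMod.unitsMap hkdvd)
    (ZMod.unitsMap_surjective hkdvd)
  have key2 : ramanujanSum n m
      = (c : ℂ) * ∑ v : (ZMod k)ˣ, EE k (((v : (ZMod k)ˣ) : ZMod k) * (m' : ZMod k)) := by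
    rw [key, ← hsum (fun v : (ZMod k)ˣ => EE k (((v : (ZMod k)ˣ) : ZMod k) * (m' : ZMod k)))]
    refine Finset.sum_congr rfl (fun u _ => ?_)
    congr 1
  have hUnit : IsUnit ((m' : ZMod k)) := by
    have hc : IsCoprime m' ((k : ℕ) : ℤ) := Int.isCoprime_iff_gcd_eq_one.mpr hcop
    have h3 := hc.map (Int.castRingHom (ZMod k))
    have h4 : ((((k : ℕ) : ℤ) : ZMod k)) = 0 := by
      push_cast
      exact ZMod.natCast_self k
    rw [show ((Int.castRingHom (ZMod k)) m') = ((m' : ZMod k)) from rfl,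
      show ((Int.castRingHom (ZMod k)) (((k : ℕ) : ℤ))) = ((((k : ℕ) : ℤ) : ZMod k)) from rfl,
      h4] at h3
    exact isCoprime_zero_right.mp h3
  have key3 : ∑ v : (ZMod k)ˣ, EE k (((v : (ZMod k)ˣ) : ZMod k) * (m' : ZMod k))
      = ∑ v : (ZMod k)ˣ, EE k ((v : (ZMod k)ˣ) : ZMod k) := by
    refine Fintype.sum_equiv (Equiv.mulRight hUnit.unit) _ _ (fun v => ?_)
    simp only [Equiv.coe_mulRight, Units.val_mul, IsUnit.unit_spec]
  have key4 : ∑ v : (ZMod k)ˣ, EE k ((v : (ZMod k)ˣ) : ZMod k) = ramanujanSum k 1 := by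
    rw [ramanujanSum, ← sum_coprime_eq_sum_units k (EE k)]
    refine Finset.sum_congr rfl (fun j hj => ?_)
    have h5 : ((j : ℕ) : ZMod k) = (((j : ℕ) : ℤ) : ZMod k) := by push_cast; rfl
    rw [h5, EE_intCast]
    congr 1
    push_cast
    ring
  have hcards : (c : ℂ) = (Nat.totient n : ℂ) / (Nat.totient k : ℂ) := by
    have h1 : c * Nat.totient k = Nat.totient n := by
      rw [← ZMod.card_units_eq_totient k, ← ZMod.card_units_eq_totient n]
      exact hcard
    have hphk : (Nat.totient k : ℂ) ≠ 0 :=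
      Nat.cast_ne_zero.mpr (Nat.totient_pos.mpr (Nat.pos_of_ne_zero hk0)).ne'
    rw [eq_div_iff hphk]
    exact_mod_cast h1
  rw [key2, key3, key4, ramanujanSum_one k hk0, hcards]
end

section
/- Let n be a positive integer and m, k be non-negative integers with k ≤ n, and let d = gcd(m, n). The coefficient of z^k in the polynomial ∏_{j=1}^{n} (1 + z·exp(2πi·jm/n)) equals (−1)^{k + kd/n} · binom(d, kd/n) if n divides kd, and equals 0 if n does not divide kd. -/
open Finset Polynomial

lemma aux_prod_range (e : ℕ) (he : 0 < e) (ζ : ℂ) (hζ : IsPrimitiveRoot ζ e) (z : ℂ) :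
    ∏ j ∈ Finset.range e, (1 + ζ ^ j * z) = 1 - (-1) ^ e * z ^ e := by
  rcases eq_or_ne z 0 with rfl | hz
  · simp [zero_pow he.ne']
  · have hiff : ∀ j : ℕ, (1 + ζ ^ j * z) = (-z) * ((-z⁻¹) - ζ ^ j) := by
      intro j
      field_simp
      ring
    rw [Finset.prod_congr rfl (fun j _ => hiff j), Finset.prod_mul_distrib,
      Finset.prod_const, Finset.card_range]
    haveI : NeZero e := ⟨he.ne'⟩
    have hbij : ∏ j ∈ Finset.range e, ((-z⁻¹) - ζ ^ j)
        = ∏ μ ∈ Polynomial.nthRootsFinset e (1 : ℂ), ((-z⁻¹) - μ) := by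
      refine Finset.prod_bij (fun j _ => ζ ^ j) ?_ ?_ ?_ ?_
      · intro j _
        refine (Polynomial.mem_nthRootsFinset he 1).2 ?_
        rw [← pow_mul, mul_comm, pow_mul, hζ.pow_eq_one, one_pow]
      · intro a ha b hb h
        exact hζ.injOn_pow (Finset.mem_coe.mpr ha) (Finset.mem_coe.mpr hb) h
      · intro μ hμ
        obtain ⟨i, hi, rfl⟩ :=
          hζ.eq_pow_of_pow_eq_one ((Polynomial.mem_nthRootsFinset he 1).1 hμ)
        exact ⟨i, Finset.mem_range.mpr hi, rfl⟩
      · intro j _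
        rfl
    have heval : ∏ μ ∈ Polynomial.nthRootsFinset e (1 : ℂ), ((-z⁻¹) - μ) = (-z⁻¹) ^ e - 1 := by
      have := congrArg (Polynomial.eval (-z⁻¹)) (Polynomial.X_pow_sub_one_eq_prod he hζ)
      simpa [Polynomial.eval_prod] using this.symm
    rw [hbij, heval, mul_sub, ← mul_pow]
    have h1 : (-z) * (-z⁻¹) = 1 := by field_simp
    rw [h1, one_pow, mul_one, neg_pow z]

lemma aux_periodic_prod {M : Type*} [CommMonoid M] (f : ℕ → M) (e : ℕ)
    (hf : ∀ j, f (j + e) = f j) (d : ℕ) :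
    ∏ j ∈ Finset.range (d * e), f j = (∏ j ∈ Finset.range e, f j) ^ d := by
  have hshift : ∀ c j, f (c * e + j) = f j := by
    intro c
    induction c with
    | zero => simp
    | succ c ih2 =>
      intro j
      have h1 : (c + 1) * e + j = (c * e + j) + e := by ring
      rw [h1, hf, ih2]
  induction d with
  | zero => simp
  | succ d ih =>
    rw [Nat.succ_mul, Finset.prod_range_add, ih, pow_succ]
    congr 1
    exact Finset.prod_congr rfl fun j _ => hshift d j

lemma aux_shift_prod {M : Type*} [CommMonoid M] (g : ℕ → M) (e : ℕ) (he : 0 < e)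
    (hg : ∀ j, g (j + e) = g j) :
    ∏ j ∈ Finset.range e, g (j + 1) = ∏ j ∈ Finset.range e, g j := by
  obtain ⟨e', rfl⟩ := Nat.exists_eq_add_of_lt he
  simp only [zero_add]
  rw [Finset.prod_range_succ, Finset.prod_range_succ']
  have : g (e' + 1) = g 0 := by
    have := hg 0
    simpa using this
  rw [this]

lemma aux_coeff (d e k : ℕ) (c : ℂ) (he : 0 < e) (hk : k ≤ d * e) :
    ((1 + Polynomial.C c * Polynomial.X ^ e) ^ d).coeff k =
      if e ∣ k then c ^ (k / e) * (d.choose (k / e) : ℂ) else 0 := by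
  rw [add_comm, add_pow, Polynomial.finset_sum_coeff]
  have hterm : ∀ i ∈ Finset.range (d + 1),
      ((Polynomial.C c * Polynomial.X ^ e) ^ i * 1 ^ (d - i) *
        (d.choose i : ℂ[X])).coeff k =
      if k = e * i then c ^ i * (d.choose i : ℂ) else 0 := by
    intro i _
    rw [one_pow, mul_one, mul_pow, ← Polynomial.C_pow, ← pow_mul,
      ← Polynomial.C_eq_natCast, Polynomial.coeff_mul_C, Polynomial.coeff_C_mul,
      Polynomial.coeff_X_pow]
    by_cases h : k = e * i <;> simp [h]
  rw [Finset.sum_congr rfl hterm]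
  by_cases h : e ∣ k
  · rw [Finset.sum_eq_single (k / e)]
    · rw [if_pos (Nat.mul_div_cancel' h).symm, if_pos h]
    · intro i _ hne
      rw [if_neg]
      intro h2
      exact hne (by rw [h2, Nat.mul_div_cancel_left _ he])
    · intro hnot
      exfalso
      apply hnot
      rw [Finset.mem_range, Nat.lt_succ_iff]
      calc k / e ≤ d * e / e := Nat.div_le_div_right hk
        _ = d := Nat.mul_div_cancel d he
  · rw [if_neg h, Finset.sum_eq_zero]
    intro i _
    rw [if_neg]
    intro h2
    exact h ⟨i, h2⟩

/-- The coefficient of `z^k` in `∏_{j=1}^{n} (1 + z·exp(2πi·jm/n))` is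
`(−1)^{k + kd/n} · C(d, kd/n)` when `n ∣ kd` (where `d = gcd(m,n)`), and `0` otherwise. -/
theorem coeff_prod_one_add_mul_exp (n : ℕ) (hn : 0 < n) (m k : ℕ) (hk : k ≤ n) :
    (∏ j ∈ Finset.Icc 1 n,
        (1 + Polynomial.C (Complex.exp (2 * Real.pi * Complex.I * (j : ℂ) * (m : ℂ) / (n : ℂ)))
          * Polynomial.X)).coeff k =
      if n ∣ k * Nat.gcd m n then
        (-1 : ℂ) ^ (k + k * Nat.gcd m n / n) * ((Nat.gcd m n).choose (k * Nat.gcd m n / n) : ℂ)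
      else 0 := by
  set d := Nat.gcd m n with hd
  have hdpos : 0 < d := Nat.gcd_pos_of_pos_right m hn
  set e := n / d with hedef
  have hdn : d ∣ n := Nat.gcd_dvd_right m n
  have hne : n = d * e := (Nat.mul_div_cancel' hdn).symm
  have hepos : 0 < e := Nat.div_pos (Nat.le_of_dvd hn hdn) hdpos
  set ω := Complex.exp (2 * Real.pi * Complex.I * (m : ℂ) / (n : ℂ)) with hω_def
  have hdC : (d : ℂ) ≠ 0 := Nat.cast_ne_zero.mpr hdpos.ne'
  have heC : (e : ℂ) ≠ 0 := Nat.cast_ne_zero.mpr hepos.ne'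
  have hω : IsPrimitiveRoot ω e := by
    have h1 := Complex.isPrimitiveRoot_exp_of_coprime (m / d) e hepos.ne'
      (Nat.coprime_div_gcd_div_gcd hdpos)
    have hm : (m : ℂ) = (d : ℂ) * ((m / d : ℕ) : ℂ) := by
      exact_mod_cast congrArg (Nat.cast : ℕ → ℂ) (Nat.mul_div_cancel' (Nat.gcd_dvd_left m n)).symm
    have hnC : (n : ℂ) = (d : ℂ) * (e : ℂ) := by exact_mod_cast hne
    have harg : 2 * Real.pi * Complex.I * (m : ℂ) / (n : ℂ)
        = 2 * Real.pi * Complex.I * (((m / d : ℕ) : ℂ) / (e : ℂ)) := by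
      rw [hm, hnC]
      field_simp
    rw [hω_def, harg]
    exact h1
  have hexp : ∀ j : ℕ,
      Complex.exp (2 * Real.pi * Complex.I * (j : ℂ) * (m : ℂ) / (n : ℂ)) = ω ^ j := by
    intro j
    rw [hω_def, ← Complex.exp_nat_mul]
    congr 1
    ring
  have hpoly : (∏ j ∈ Finset.Icc 1 n,
        (1 + Polynomial.C (Complex.exp (2 * Real.pi * Complex.I * (j : ℂ) * (m : ℂ) / (n : ℂ)))
          * Polynomial.X))
      = (1 + Polynomial.C (-(-1 : ℂ) ^ e) * Polynomial.X ^ e) ^ d := by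
    apply Polynomial.funext
    intro z
    rw [Polynomial.eval_prod]
    simp only [Polynomial.eval_add, Polynomial.eval_one, Polynomial.eval_mul, Polynomial.eval_C,
      Polynomial.eval_X, Polynomial.eval_pow]
    set g : ℕ → ℂ := fun j => 1 + ω ^ j * z with hg_def
    have hper : ∀ j, g (j + e) = g j := by
      intro j
      simp only [hg_def]
      rw [pow_add, hω.pow_eq_one, mul_one]
    have hL : ∏ j ∈ Finset.Icc 1 n, (1 + Complex.exp
          (2 * Real.pi * Complex.I * (j : ℂ) * (m : ℂ) / (n : ℂ)) * z) = ∏ j ∈ Finset.Icc 1 n, g j := by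
      refine Finset.prod_congr rfl fun j _ => ?_
      rw [hexp j]
    rw [hL, ← Finset.Ico_add_one_right_eq_Icc, Finset.prod_Ico_eq_prod_range]
    have hrange : n + 1 - 1 = n := by omega
    rw [hrange, hne]
    have h2 : ∏ j ∈ Finset.range (d * e), g (1 + j)
        = (∏ j ∈ Finset.range e, g (j + 1)) ^ d := by
      have := aux_periodic_prod (fun j => g (j + 1)) e (fun j => by
        show g (j + e + 1) = g (j + 1)
        rw [add_right_comm, hper]) d
      simpa [add_comm] using this
    rw [h2, aux_shift_prod g e hepos hper, aux_prod_range e hepos ω hω z]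
    congr 1
    ring
  rw [hpoly, aux_coeff d e k _ hepos (hne ▸ hk)]
  have hcond : (e ∣ k) ↔ (n ∣ k * d) := by
    rw [hne, mul_comm d e, Nat.mul_dvd_mul_iff_right hdpos]
  have hdiv : k * d / n = k / e := by
    rw [hne, mul_comm d e, Nat.mul_div_mul_right k e hdpos]
  by_cases h : e ∣ k
  · rw [if_pos h, if_pos (hcond.mp h), hdiv]
    obtain ⟨t, rfl⟩ := h
    rw [Nat.mul_div_cancel_left t hepos]
    congr 1
    have : (-(-1 : ℂ) ^ e) = (-1 : ℂ) ^ (e + 1) := by rw [pow_succ]; ring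
    rw [this, ← pow_mul]
    congr 1
    ring
  · rw [if_neg h, if_neg (fun hc => h (hcond.mpr hc))]
end

section
/- Let n be a positive integer and k a non-negative integer with k ≤ n, and suppose n is odd or k is odd. Then the number P_n(k,0) of k-element subsets of Z/nZ whose elements sum to 0 in Z/nZ satisfies P_n(k,0) = (1/n) · ∑_{d | gcd(n,k)} φ(d) · binom(n/d, k/d), where φ is Euler's totient function. -/
open Finset

open Polynomial in
private lemma prod_X_add_C_prim {d : ℕ} (hd : 0 < d) {w : ℂ} (hw : IsPrimitiveRoot w d) :
    ∏ i ∈ Finset.range d, (X + C (w ^ i)) = X ^ d - C ((-1 : ℂ) ^ d) := by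
  have hinj : ∀ a ∈ Finset.range d, ∀ b ∈ Finset.range d, w ^ a = w ^ b → a = b :=
    fun a ha b hb h => hw.injOn_pow (by simpa using ha) (by simpa using hb) h
  have hset : nthRootsFinset d (1 : ℂ) = (Finset.range d).image (w ^ ·) := by
    symm
    apply Finset.eq_of_subset_of_card_le
    · intro x hx
      obtain ⟨i, hi, rfl⟩ := Finset.mem_image.1 hx
      exact (mem_nthRootsFinset hd (1 : ℂ)).2
        (by rw [← pow_mul, mul_comm, pow_mul, hw.pow_eq_one, one_pow])
    · rw [hw.card_nthRootsFinset, Finset.card_image_of_injOn hinj, Finset.card_range]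
  have key : ∀ y : ℂ, ∏ i ∈ Finset.range d, (y - w ^ i) = y ^ d - 1 := by
    intro y
    have h1 := congrArg (eval y) (X_pow_sub_one_eq_prod hd hw)
    rw [hset, Finset.prod_image hinj] at h1
    simpa [eval_prod] using h1.symm
  apply Polynomial.funext
  intro y
  have h2 : ∏ i ∈ Finset.range d, (y + w ^ i)
      = (-1 : ℂ) ^ d * ∏ i ∈ Finset.range d, (-y - w ^ i) := by
    rw [show ((-1 : ℂ) ^ d) = ∏ _i ∈ Finset.range d, (-1 : ℂ) by
      rw [Finset.prod_const, Finset.card_range], ← Finset.prod_mul_distrib]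
    exact Finset.prod_congr rfl fun i _ => by ring
  simp only [eval_prod, eval_add, eval_X, eval_C, eval_sub, eval_pow, eval_one]
  rw [h2, key (-y)]
  rcases Nat.even_or_odd d with h | h
  · rw [h.neg_one_pow, h.neg_pow]; ring
  · rw [h.neg_one_pow, h.neg_pow]; ring

private lemma prod_range_pow_periodic {M : Type*} [CommMonoid M] (h : ℕ → M) (d : ℕ)
    (hper : ∀ i, h (i + d) = h i) (m : ℕ) :
    ∏ i ∈ Finset.range (d * m), h i = (∏ i ∈ Finset.range d, h i) ^ m := by
  have hper' : ∀ j i, h (i + d * j) = h i := by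
    intro j
    induction j with
    | zero => simp
    | succ j ih =>
      intro i
      have heq : i + d * (j + 1) = (i + d * j) + d := by ring
      rw [heq, hper, ih]
  induction m with
  | zero => simp
  | succ m ih =>
    rw [Nat.mul_succ, Finset.prod_range_add, ih, pow_succ]
    congr 1
    exact Finset.prod_congr rfl fun i _ => by rw [add_comm, hper']

open Polynomial in
private lemma coeff_pow_X_pow_sub_C {d : ℕ} (m j : ℕ) (hd : 0 < d) (hj : j ≤ d * m) (ε : ℂ) :
    ((X ^ d - C ε) ^ m).coeff (d * m - j) =
      if d ∣ j then (-ε) ^ (j / d) * ((m.choose (j / d) : ℕ) : ℂ) else 0 := by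
  have expand : (X ^ d - C ε) ^ m
      = ∑ i ∈ Finset.range (m + 1), C ((-ε) ^ (m - i) * (m.choose i : ℂ)) * X ^ (d * i) := by
    rw [sub_eq_add_neg, ← C_neg, add_pow]
    refine Finset.sum_congr rfl fun i hi => ?_
    rw [← pow_mul, ← C_pow, ← C_eq_natCast, mul_assoc, ← C_mul, mul_comm]
  rw [expand, finset_sum_coeff]
  simp only [coeff_C_mul, coeff_X_pow]
  by_cases hdj : d ∣ j
  · obtain ⟨q, rfl⟩ := hdj
    have hqm : q ≤ m := Nat.le_of_mul_le_mul_left hj hd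
    have hdq : d * m - d * q = d * (m - q) := by rw [Nat.mul_sub]
    rw [if_pos (dvd_mul_right d q)]
    rw [Finset.sum_eq_single (m - q)]
    · rw [if_pos hdq, Nat.sub_sub_self hqm, Nat.choose_symm hqm,
        Nat.mul_div_cancel_left q hd, mul_one]
    · intro i hi hne
      rw [if_neg, mul_zero]
      intro heq
      exact hne (Nat.eq_of_mul_eq_mul_left hd ((hdq ▸ heq : d * (m - q) = d * i))).symm
    · intro habs
      exact absurd (Finset.mem_range.2 (Nat.lt_succ_of_le (Nat.sub_le m q))) habs
  · rw [if_neg hdj]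
    apply Finset.sum_eq_zero
    intro i hi
    rw [if_neg, mul_zero]
    intro heq
    have h1 : d * i ≤ d * m := heq ▸ Nat.sub_le _ _
    have him : i ≤ m := Nat.le_of_mul_le_mul_left h1 hd
    refine hdj ⟨m - i, ?_⟩
    rw [Nat.mul_sub]
    omega

/-- If `n` or `k` is odd, the number `P_n(k,0)` of `k`-subsets of `ℤ/nℤ` summing to `0`
is `(1/n) · ∑_{d ∣ gcd(n,k)} φ(d) · C(n/d, k/d)`. -/
theorem count_subsets_sum_zero (n : ℕ) (hn : 0 < n) (k : ℕ) (hk : k ≤ n)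
    (hodd : Odd n ∨ Odd k) :
    (Nat.card {s : Finset (ZMod n) // s.card = k ∧ (∑ x ∈ s, x) = 0} : ℚ) =
      (1 / n : ℚ) * ∑ d ∈ (Nat.gcd n k).divisors,
        (Nat.totient d : ℚ) * ((n / d).choose (k / d) : ℚ) := by
  classical
  have n0 : n ≠ 0 := hn.ne'
  haveI : NeZero n := ⟨n0⟩
  have hcard : Fintype.card (ZMod n) = n := ZMod.card n
  set N : ℕ := Nat.card {s : Finset (ZMod n) // s.card = k ∧ (∑ x ∈ s, x) = 0} with hNdef
  have hN : N = #(Finset.univ.filter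
      fun s : Finset (ZMod n) => s.card = k ∧ (∑ x ∈ s, x) = 0) := by
    rw [hNdef, Nat.card_eq_fintype_card, Fintype.card_subtype]
  -- the key identity over ℕ
  have key : n * N = ∑ d ∈ (Nat.gcd n k).divisors, Nat.totient d * ((n / d).choose (k / d)) := by
    have hcast : ((n * N : ℕ) : ℂ)
        = ((∑ d ∈ (Nat.gcd n k).divisors, Nat.totient d * ((n / d).choose (k / d)) : ℕ) : ℂ) := by
      push_cast
      set ζ : ℂ := Complex.exp (2 * Real.pi * Complex.I / n) with hζdef
      have hζ : IsPrimitiveRoot ζ n := Complex.isPrimitiveRoot_exp n n0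
      have hζ1 : ζ ^ n = 1 := hζ.pow_eq_one
      set ψ : AddChar (ZMod n) ℂ := AddChar.zmodChar n hζ1 with hψdef
      have hψprim : ψ.IsPrimitive := AddChar.zmodChar_primitive_of_primitive_root n hζ
      have hψ_sum : ∀ a : ZMod n, (∑ t : ZMod n, ψ (t * a)) = if a = 0 then (n : ℂ) else 0 := by
        intro a
        rw [AddChar.sum_mulShift a hψprim]
        simp [ZMod.card]
      have hψ_prod : ∀ (s : Finset (ZMod n)) (t : ZMod n),
          ψ (t * ∑ x ∈ s, x) = ∏ x ∈ s, ψ (t * x) := by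
        intro s t
        induction s using Finset.cons_induction with
        | empty => simp
        | cons a s ha ih =>
          rw [Finset.sum_cons, Finset.prod_cons, mul_add, AddChar.map_add_eq_mul, ih]
      -- Step 1
      have step1 : (n : ℂ) * (N : ℂ)
          = ∑ t : ZMod n, ∑ s ∈ Finset.powersetCard k (Finset.univ : Finset (ZMod n)),
              ∏ x ∈ s, ψ (t * x) := by
        rw [Finset.sum_comm]
        have h1 : ∀ s ∈ Finset.powersetCard k (Finset.univ : Finset (ZMod n)),
            (∑ t : ZMod n, ∏ x ∈ s, ψ (t * x))
              = if (∑ x ∈ s, x) = 0 then (n : ℂ) else 0 := by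
          intro s _
          rw [← Finset.sum_congr rfl fun t _ => (hψ_prod s t), hψ_sum]
        rw [Finset.sum_congr rfl h1, ← Finset.sum_filter]
        have hfil : Finset.filter (fun s : Finset (ZMod n) => (∑ x ∈ s, x) = 0)
              (Finset.powersetCard k Finset.univ)
            = Finset.univ.filter
              (fun s : Finset (ZMod n) => s.card = k ∧ (∑ x ∈ s, x) = 0) := by
          ext s
          simp [Finset.mem_powersetCard_univ, and_comm]
        rw [hfil, Finset.sum_const, nsmul_eq_mul, ← hN, mul_comm]
      -- Step 2: evaluate the inner sum for each t
      have step2 : ∀ t : ZMod n,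
          (∑ s ∈ Finset.powersetCard k (Finset.univ : Finset (ZMod n)), ∏ x ∈ s, ψ (t * x))
            = if (addOrderOf t) ∣ k
              then (((n / addOrderOf t).choose (k / addOrderOf t) : ℕ) : ℂ) else 0 := by
        intro t
        set v : ℕ := t.val with hvdef
        set g : ℕ := Nat.gcd n v with hgdef
        set d : ℕ := n / g with hddef
        have hgd : g ∣ n := Nat.gcd_dvd_left n v
        have hg0 : 0 < g := Nat.gcd_pos_of_pos_left v hn
        have hnd : n = g * d := (Nat.mul_div_cancel' hgd).symm
        have hd0 : 0 < d := Nat.div_pos (Nat.le_of_dvd hn hgd) hg0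
        have hddvd : d ∣ n := ⟨g, by rw [hnd]; ring⟩
        set u : ℂ := ζ ^ v with hudef
        have hu : IsPrimitiveRoot u d := by
          have h1 : IsPrimitiveRoot (ζ ^ g) d := hζ.pow hn hnd
          have h2 : v = g * (v / g) := (Nat.mul_div_cancel' (Nat.gcd_dvd_right n v)).symm
          have h3 : (v / g).Coprime d := (Nat.coprime_div_gcd_div_gcd hg0).symm
          have h4 : u = (ζ ^ g) ^ (v / g) := by rw [← pow_mul, ← h2]
          rw [h4]
          exact h1.pow_of_coprime _ h3
        have horder : addOrderOf t = d := by
          conv_lhs => rw [← ZMod.natCast_rightInverse t]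
          rw [ZMod.addOrderOf_coe v n0]
        have hψtx : ∀ x : ZMod n, ψ (t * x) = u ^ x.val := by
          intro x
          rw [hψdef, AddChar.zmodChar_apply, ZMod.val_mul, ← pow_eq_pow_mod _ hζ1,
            pow_mul, hudef]
        have hud : u ^ d = 1 := hu.pow_eq_one
        have hodd_d : d ∣ k → Odd d := by
          intro hdk
          rcases Nat.even_or_odd d with he | ho
          · exfalso
            rcases hodd with h | h
            · exact (Nat.not_even_iff_odd.2 h) (even_iff_two_dvd.2 (he.two_dvd.trans hddvd))
            · exact (Nat.not_even_iff_odd.2 h) (even_iff_two_dvd.2 (he.two_dvd.trans hdk))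
          · exact ho
        rw [horder]
        have hn2 : n = d * (n / d) := (Nat.mul_div_cancel' hddvd).symm
        open Polynomial in
        calc (∑ s ∈ Finset.powersetCard k (Finset.univ : Finset (ZMod n)), ∏ x ∈ s, ψ (t * x))
            = (∏ x : ZMod n, (X + C (ψ (t * x)))).coeff (n - k) := by
              have h := Finset.prod_X_add_C_coeff (Finset.univ : Finset (ZMod n))
                (fun x => ψ (t * x)) (k := n - k)
                (by rw [Finset.card_univ, hcard]; omega)
              rw [Finset.card_univ, hcard, Nat.sub_sub_self hk] at h
              exact h.symm
          _ = (∏ i ∈ Finset.range n, (X + C (u ^ i))).coeff (n - k) := by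
              congr 1
              rw [Finset.prod_congr rfl fun x _ => by rw [hψtx x]]
              exact Finset.prod_nbij' (fun x => x.val) (fun i => (i : ZMod n))
                (fun x _ => Finset.mem_range.2 (ZMod.val_lt x))
                (fun i _ => Finset.mem_univ _)
                (fun x _ => ZMod.natCast_rightInverse x)
                (fun i hi => ZMod.val_natCast_of_lt (Finset.mem_range.1 hi))
                (fun x _ => rfl)
          _ = ((∏ i ∈ Finset.range d, (X + C (u ^ i))) ^ (n / d)).coeff (n - k) := by
              rw [← prod_range_pow_periodic (fun i => X + C (u ^ i)) d
                (fun i => by simp [pow_add, hud]) (n / d), ← hn2]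
          _ = ((X ^ d - C ((-1 : ℂ) ^ d)) ^ (n / d)).coeff (n - k) := by
              rw [prod_X_add_C_prim hd0 hu]
          _ = if d ∣ k then (-(-1 : ℂ) ^ d) ^ (k / d) * (((n / d).choose (k / d) : ℕ) : ℂ)
                else 0 := by
              rw [show n - k = d * (n / d) - k by rw [← hn2]]
              exact coeff_pow_X_pow_sub_C (n / d) k hd0 (by rw [← hn2]; exact hk) _
          _ = if d ∣ k then (((n / d).choose (k / d) : ℕ) : ℂ) else 0 := by
              by_cases hdk : d ∣ k
              · rw [if_pos hdk, if_pos hdk, (hodd_d hdk).neg_one_pow]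
                norm_num
              · rw [if_neg hdk, if_neg hdk]
      -- assemble
      rw [step1, Finset.sum_congr rfl fun t _ => step2 t]
      have hmaps : ∀ t : ZMod n, t ∈ Finset.univ → addOrderOf t ∈ n.divisors := fun t _ =>
        Nat.mem_divisors.2 ⟨by simpa only [hcard] using addOrderOf_dvd_card (x := t), n0⟩
      rw [← Finset.sum_fiberwise_of_maps_to hmaps]
      have hstep3 : ∀ d ∈ n.divisors,
          (∑ t ∈ Finset.univ.filter (fun t : ZMod n => addOrderOf t = d),
            if (addOrderOf t) ∣ k
              then (((n / addOrderOf t).choose (k / addOrderOf t) : ℕ) : ℂ) else 0)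
          = (Nat.totient d : ℂ)
              * (if d ∣ k then (((n / d).choose (k / d) : ℕ) : ℂ) else 0) := by
        intro d hd
        have h1 : ∀ t ∈ Finset.univ.filter (fun t : ZMod n => addOrderOf t = d),
            (if (addOrderOf t) ∣ k
              then (((n / addOrderOf t).choose (k / addOrderOf t) : ℕ) : ℂ) else 0)
            = (if d ∣ k then (((n / d).choose (k / d) : ℕ) : ℂ) else 0) := by
          intro t ht
          rw [(Finset.mem_filter.1 ht).2]
        rw [Finset.sum_congr rfl h1, Finset.sum_const, nsmul_eq_mul]
        congr 1
        have hdvd : d ∣ Fintype.card (ZMod n) := by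
          rw [hcard]; exact (Nat.mem_divisors.1 hd).1
        exact_mod_cast congrArg (Nat.cast : ℕ → ℂ)
          (IsAddCyclic.card_addOrderOf_eq_totient (α := ZMod n) hdvd)
      rw [Finset.sum_congr rfl hstep3]
      simp_rw [mul_ite, mul_zero]
      rw [← Finset.sum_filter]
      have hfil2 : n.divisors.filter (· ∣ k) = (Nat.gcd n k).divisors := by
        ext a
        simp only [Finset.mem_filter, Nat.mem_divisors, Nat.dvd_gcd_iff]
        constructor
        · rintro ⟨⟨h1, _⟩, h2⟩
          exact ⟨⟨h1, h2⟩, fun hg => n0 (Nat.eq_zero_of_gcd_eq_zero_left hg)⟩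
        · rintro ⟨⟨h1, h2⟩, _⟩
          exact ⟨⟨h1, n0⟩, h2⟩
      rw [hfil2]
    exact_mod_cast hcast
  -- conclude over ℚ
  have hQ : (n : ℚ) * (N : ℚ)
      = ∑ d ∈ (Nat.gcd n k).divisors, (Nat.totient d : ℚ) * ((n / d).choose (k / d) : ℚ) := by
    exact_mod_cast congrArg (Nat.cast : ℕ → ℚ) key
  have hn' : (n : ℚ) ≠ 0 := Nat.cast_ne_zero.2 n0
  rw [← hQ]
  field_simp
end

section
/- Let n be a positive integer and k a non-negative integer with k ≤ n, and suppose n is odd or k is odd. Then the number P_n(k,1) of k-element subsets of Z/nZ whose elements sum to 1 in Z/nZ satisfies P_n(k,1) = (1/n) · ∑_{d | gcd(n,k)} μ(d) · binom(n/d, k/d), where μ is the Möbius function. -/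
open Finset ArithmeticFunction
open scoped ArithmeticFunction.Moebius

namespace CountAux

open Polynomial

lemma pow_mod_eq {z : ℂ} {n : ℕ} (hz : z ^ n = 1) (a : ℕ) : z ^ (a % n) = z ^ a := by
  conv_rhs => rw [← Nat.mod_add_div a n, pow_add, pow_mul, hz, one_pow, mul_one]

lemma chi_add {n : ℕ} [NeZero n] {z : ℂ} (hz : z ^ n = 1) (x y : ZMod n) :
    z ^ (x + y).val = z ^ x.val * z ^ y.val := by
  rw [ZMod.val_add, pow_mod_eq hz, pow_add]

lemma chi_sum {n : ℕ} [NeZero n] {z : ℂ} (hz : z ^ n = 1) (S : Finset (ZMod n)) :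
    z ^ (∑ x ∈ S, x).val = ∏ x ∈ S, z ^ x.val := by
  classical
  induction S using Finset.cons_induction with
  | empty => simp
  | cons a S ha ih => rw [Finset.sum_cons, Finset.prod_cons, chi_add hz, ih]

lemma orth {n : ℕ} [NeZero n] {ξ : ℂ} (hξ : IsPrimitiveRoot ξ n) (c : ZMod n) :
    ∑ j ∈ range n, (ξ ^ j) ^ c.val = if c = 0 then (n : ℂ) else 0 := by
  have h1 : ∀ j, (ξ ^ j) ^ c.val = (ξ ^ c.val) ^ j := fun j => by
    rw [← pow_mul, ← pow_mul, mul_comm]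
  simp_rw [h1]
  by_cases hc : c = 0
  · simp [hc]
  · rw [if_neg hc]
    have hvpos : 0 < c.val := by
      rcases Nat.eq_zero_or_pos c.val with h | h
      · exact absurd ((ZMod.val_eq_zero c).1 h) hc
      · exact h
    have hne : ξ ^ c.val ≠ 1 := hξ.pow_ne_one_of_pos_of_lt hvpos.ne' (ZMod.val_lt c)
    have hpow : (ξ ^ c.val) ^ n = 1 := by
      rw [← pow_mul, mul_comm, pow_mul, hξ.pow_eq_one, one_pow]
    rw [geom_sum_eq hne, hpow, sub_self, zero_div]

lemma nthRootsFinset_eq_image {m : ℕ} (hm : 0 < m) {ξ : ℂ} (hξ : IsPrimitiveRoot ξ m) :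
    nthRootsFinset m (1 : ℂ) = (range m).image (ξ ^ ·) := by
  haveI : NeZero m := ⟨hm.ne'⟩
  ext z
  simp only [mem_image, mem_range]
  constructor
  · intro hz
    obtain ⟨i, hi, rfl⟩ := hξ.eq_pow_of_pow_eq_one ((mem_nthRootsFinset hm (1 : ℂ)).1 hz)
    exact ⟨i, hi, rfl⟩
  · rintro ⟨i, hi, rfl⟩
    exact (mem_nthRootsFinset hm (1 : ℂ)).2
      (by rw [← pow_mul, mul_comm, pow_mul, hξ.pow_eq_one, one_pow])

lemma prod_range_blocks {M : Type*} [CommMonoid M] (g : ℕ → M) (m d : ℕ) :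
    ∏ i ∈ range (m * d), g i = ∏ j ∈ range m, ∏ r ∈ range d, g (j * d + r) := by
  induction m with
  | zero => simp
  | succ m ih =>
      rw [Nat.succ_mul, Finset.prod_range_add, ih, Finset.prod_range_succ]

/-- `∏_{r<d} (X + C (z^r)) = X^d - C ((-1)^d)` for a primitive `d`-th root `z`. -/
lemma prod_X_add_C_pow {d : ℕ} (hd : 0 < d) {z : ℂ} (hz : IsPrimitiveRoot z d) :
    ∏ r ∈ range d, (X + C (z ^ r)) = X ^ d - C ((-1 : ℂ) ^ d) := by
  have hroot : (X : ℂ[X]) ^ d - 1 = ∏ r ∈ range d, (X - C (z ^ r)) := by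
    rw [X_pow_sub_one_eq_prod hd hz, nthRootsFinset_eq_image hd hz,
      Finset.prod_image]
    intro i hi j hj hij
    exact hz.pow_inj (mem_range.1 hi) (mem_range.1 hj) hij
  have hev : ∀ y : ℂ, ∏ r ∈ range d, (y - z ^ r) = y ^ d - 1 := by
    intro y
    have := congrArg (Polynomial.eval y) hroot
    simpa [eval_prod] using this.symm
  apply Polynomial.funext
  intro y
  have h1 : ∀ r : ℕ, (y + z ^ r) = (-1) * (-y - z ^ r) := fun r => by ring
  simp only [eval_prod, eval_add, eval_X, eval_C, eval_sub, eval_pow, eval_one]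
  calc ∏ r ∈ range d, (y + z ^ r)
      = ∏ r ∈ range d, ((-1) * (-y - z ^ r)) := Finset.prod_congr rfl fun r _ => h1 r
    _ = (-1 : ℂ) ^ d * ((-y) ^ d - 1) := by
        rw [Finset.prod_mul_distrib, Finset.prod_const, card_range, hev (-y)]
    _ = y ^ d - (-1 : ℂ) ^ d := by
        rw [mul_sub, ← mul_pow, neg_mul_neg, one_mul, mul_one]

/-- Coefficient extraction from `(X^d + C c)^m`. -/
lemma coeff_pow_X_pow_add_C {d m : ℕ} (hd : 0 < d) (c : ℂ) (t : ℕ) (ht : t ≤ d * m) :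
    ((X ^ d + C c : ℂ[X]) ^ m).coeff t =
      if d ∣ t then ((m.choose (t / d) : ℂ) * c ^ (m - t / d)) else 0 := by
  rw [add_pow]
  simp only [finset_sum_coeff]
  have hterm : ∀ i, ((X ^ d) ^ i * C c ^ (m - i) * (m.choose i : ℂ[X])).coeff t =
      if t = d * i then (m.choose i : ℂ) * c ^ (m - i) else 0 := by
    intro i
    have h2 : ((X ^ d) ^ i * C c ^ (m - i) * (m.choose i : ℂ[X])) =
        C ((m.choose i : ℂ) * c ^ (m - i)) * X ^ (d * i) := by
      rw [← pow_mul, ← C_pow, ← C_eq_natCast, C_mul]; ring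
    rw [h2, coeff_C_mul, coeff_X_pow]
    by_cases h : t = d * i <;> simp [h]
  simp_rw [hterm]
  by_cases hdk : d ∣ t
  · rw [if_pos hdk]
    have htd : t = d * (t / d) := (Nat.mul_div_cancel' hdk).symm
    have hle : t / d ≤ m := by
      have := Nat.div_le_div_right (c := d) ht
      rwa [Nat.mul_div_cancel_left m hd] at this
    rw [Finset.sum_eq_single (t / d)]
    · rw [if_pos htd]
    · intro i _ hi
      rw [if_neg]
      intro h
      exact hi (show (t / d : ℕ) = i by rw [h, Nat.mul_div_cancel_left i hd]).symm
    · intro h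
      exact absurd (mem_range.2 (Nat.lt_succ_of_le hle)) h
  · rw [if_neg hdk]
    exact Finset.sum_eq_zero fun i _ => if_neg fun h => hdk ⟨i, h⟩

/-- Key evaluation: the elementary symmetric character sum over `k`-subsets. -/
lemma esum_eq {n d k : ℕ} [NeZero n] (hk : k ≤ n) (hdn : d ∣ n) (hd : 0 < d) {z : ℂ}
    (hz : IsPrimitiveRoot z d) :
    ∑ S ∈ powersetCard k (univ : Finset (ZMod n)), ∏ x ∈ S, z ^ x.val =
      if d ∣ k then ((n / d).choose (k / d) : ℂ) * (-(-1 : ℂ) ^ d) ^ (k / d) else 0 := by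
  have hcardu : #(univ : Finset (ZMod n)) = n := by rw [Finset.card_univ, ZMod.card]
  have hle : n - k ≤ #(univ : Finset (ZMod n)) := by omega
  have h1 := Finset.prod_X_add_C_coeff (univ : Finset (ZMod n))
      (fun x : ZMod n => z ^ x.val) hle
  have hsub : #(univ : Finset (ZMod n)) - (n - k) = k := by omega
  rw [hsub] at h1
  rw [← h1]
  -- compute the polynomial product
  have hre : ∏ x : ZMod n, (X + C (z ^ x.val)) = ∏ i ∈ range n, (X + C (z ^ i)) := by
    apply Finset.prod_bij (fun (x : ZMod n) _ => x.val)
    · exact fun x _ => mem_range.2 (ZMod.val_lt x)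
    · exact fun x _ y _ h => ZMod.val_injective n h
    · exact fun i hi => ⟨(i : ZMod n), mem_univ _, ZMod.val_cast_of_lt (mem_range.1 hi)⟩
    · exact fun x _ => rfl
  have hmd : n / d * d = n := Nat.div_mul_cancel hdn
  have hblock : ∀ j ∈ range (n / d), ∏ r ∈ range d, (X + C (z ^ (j * d + r))) =
      X ^ d + C (-(-1 : ℂ) ^ d) := by
    intro j _
    have hz2 : ∀ r : ℕ, z ^ (j * d + r) = z ^ r := fun r => by
      rw [pow_add, mul_comm j d, pow_mul, hz.pow_eq_one, one_pow, one_mul]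
    simp_rw [hz2]
    rw [prod_X_add_C_pow hd hz, map_neg, sub_eq_add_neg]
  have hP : ∏ x : ZMod n, (X + C (z ^ x.val)) =
      (X ^ d + C (-(-1 : ℂ) ^ d)) ^ (n / d) := by
    rw [hre]
    calc ∏ i ∈ range n, (X + C (z ^ i))
        = ∏ j ∈ range (n / d), ∏ r ∈ range d, (X + C (z ^ (j * d + r))) := by
          conv_lhs => rw [← hmd, prod_range_blocks]
      _ = (X ^ d + C (-(-1 : ℂ) ^ d)) ^ (n / d) := by
          rw [Finset.prod_congr rfl hblock, Finset.prod_const, card_range]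
  rw [hP, coeff_pow_X_pow_add_C hd _ (n - k) (by rw [mul_comm d (n / d), hmd]; omega)]
  by_cases hdk : d ∣ k
  · rw [if_pos (Nat.dvd_sub hdn hdk), if_pos hdk]
    obtain ⟨a, ha⟩ := hdn
    obtain ⟨b, hb⟩ := hdk
    have hba : b ≤ a := Nat.le_of_mul_le_mul_left (by omega) hd
    have h3 : n - k = d * (a - b) := by rw [ha, hb, Nat.mul_sub]
    rw [h3, ha, hb, Nat.mul_div_cancel_left _ hd, Nat.mul_div_cancel_left _ hd,
      Nat.mul_div_cancel_left _ hd, Nat.choose_symm hba, Nat.sub_sub_self hba]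
  · rw [if_neg, if_neg hdk]
    intro h
    have h2 := Nat.dvd_sub hdn h
    rw [Nat.sub_sub_self hk] at h2
    exact hdk h2

/-- The sum of the primitive `d`-th roots of unity in `ℂ` is `μ d`. -/
lemma sum_primitiveRoots_moebius {d : ℕ} (hd : 0 < d) :
    ∑ z ∈ primitiveRoots d ℂ, z = (μ d : ℂ) := by
  have key : ∀ m : ℕ, m > 0 →
      ∑ i ∈ m.divisors, (∑ z ∈ primitiveRoots i ℂ, z) = if m = 1 then (1 : ℂ) else 0 := by
    intro m hm
    have hξ : IsPrimitiveRoot (Complex.exp (2 * Real.pi * Complex.I / m)) m :=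
      Complex.isPrimitiveRoot_exp m hm.ne'
    have h1 : ∑ z ∈ nthRootsFinset m (1 : ℂ), z = if m = 1 then (1 : ℂ) else 0 := by
      rw [nthRootsFinset_eq_image hm hξ, Finset.sum_image
        (fun i hi j hj h => hξ.pow_inj (mem_range.1 hi) (mem_range.1 hj) h)]
      rcases eq_or_lt_of_le (show 1 ≤ m from hm) with h | h
      · rw [if_pos h.symm, ← h]
        simp
      · rw [if_neg (by omega), hξ.geom_sum_eq_zero h]
    rw [IsPrimitiveRoot.nthRoots_one_eq_biUnion_primitiveRoots, Finset.sum_biUnion] at h1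
    · exact h1
    · intro a _ b _ hab
      exact IsPrimitiveRoot.disjoint hab
  have h2 := (sum_eq_iff_sum_smul_moebius_eq).1 key d hd
  rw [← h2]
  rw [Finset.sum_eq_single (d, 1)]
  · simp
  · rintro ⟨x, y⟩ hxy hne
    rw [Nat.mem_divisorsAntidiagonal] at hxy
    rcases eq_or_ne y 1 with rfl | hy
    · exfalso
      apply hne
      have hx : x = d := by simpa using hxy.1
      rw [hx]
    · simp only [if_neg hy, smul_zero]
  · intro h
    exact absurd (Nat.mem_divisorsAntidiagonal.2 ⟨mul_one d, hd.ne'⟩) h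

/-- `∑_{z primitive d-th root} z^(n-1) = μ d` when `d ∣ n`. -/
lemma sum_pow_primitiveRoots {n d : ℕ} (hn : 0 < n) (hd : 0 < d) (hdn : d ∣ n) :
    ∑ z ∈ primitiveRoots d ℂ, z ^ (n - 1) = (μ d : ℂ) := by
  have hdle : d ≤ n := Nat.le_of_dvd hn hdn
  have hmod : (n - 1) % d = (d - 1) % d := by
    have h2 : d ∣ n - d := Nat.dvd_sub hdn dvd_rfl
    exact ((Nat.modEq_iff_dvd' (by omega)).2 (by
      have h3 : n - 1 - (d - 1) = n - d := by omega
      rw [h3]; exact h2)).symm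
  have hstep : ∀ z ∈ primitiveRoots d ℂ, z ^ (n - 1) = z ^ (d - 1) := by
    intro z hz
    have hz' : IsPrimitiveRoot z d := isPrimitiveRoot_of_mem_primitiveRoots hz
    rw [← pow_mod_eq hz'.pow_eq_one (n - 1), hmod, pow_mod_eq hz'.pow_eq_one]
  rw [Finset.sum_congr rfl hstep]
  obtain ⟨e, rfl⟩ : ∃ e, d = e + 1 := ⟨d - 1, by omega⟩
  have hcop : Nat.Coprime ((e + 1) - 1) (e + 1) := by
    simpa using (Nat.coprime_succ_self e).symm
  have hsq : ((e + 1) - 1) * ((e + 1) - 1) % (e + 1) = 1 % (e + 1) := by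
    rcases e with _ | f
    · simp
    · have h4 : (f + 1) * (f + 1) = (f + 1 + 1) * f + 1 := by ring
      have h5 : f + 1 + 1 - 1 = f + 1 := rfl
      rw [h5, h4, Nat.mul_add_mod]
  rw [← sum_primitiveRoots_moebius hd]
  apply Finset.sum_nbij' (i := fun z => z ^ ((e + 1) - 1)) (j := fun z => z ^ ((e + 1) - 1))
  · intro z hz
    exact (mem_primitiveRoots hd).2
      ((isPrimitiveRoot_of_mem_primitiveRoots hz).pow_of_coprime _ hcop)
  · intro z hz
    exact (mem_primitiveRoots hd).2
      ((isPrimitiveRoot_of_mem_primitiveRoots hz).pow_of_coprime _ hcop)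
  · intro z hz
    have hz' : IsPrimitiveRoot z (e + 1) := isPrimitiveRoot_of_mem_primitiveRoots hz
    rw [← pow_mul, ← pow_mod_eq hz'.pow_eq_one, hsq, pow_mod_eq hz'.pow_eq_one, pow_one]
  · intro z hz
    have hz' : IsPrimitiveRoot z (e + 1) := isPrimitiveRoot_of_mem_primitiveRoots hz
    rw [← pow_mul, ← pow_mod_eq hz'.pow_eq_one, hsq, pow_mod_eq hz'.pow_eq_one, pow_one]
  · exact fun z _ => rfl

end CountAux

open CountAux

/-- If `n` or `k` is odd, the number `P_n(k,1)` of `k`-subsets of `ℤ/nℤ` summing to `1`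
is `(1/n) · ∑_{d ∣ gcd(n,k)} μ(d) · C(n/d, k/d)`. -/
theorem count_subsets_sum_one (n : ℕ) (hn : 0 < n) (k : ℕ) (hk : k ≤ n)
    (hodd : Odd n ∨ Odd k) :
    (Nat.card {s : Finset (ZMod n) // s.card = k ∧ (∑ x ∈ s, x) = 1} : ℚ) =
      (1 / n : ℚ) * ∑ d ∈ (Nat.gcd n k).divisors,
        (μ d : ℚ) * ((n / d).choose (k / d) : ℚ) := by
  haveI : NeZero n := ⟨hn.ne'⟩
  classical
  set N : ℕ := #(filter (fun S => (∑ x ∈ S, x) = 1) (powersetCard k (univ : Finset (ZMod n)))) with hN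
  have hcard : Nat.card {s : Finset (ZMod n) // s.card = k ∧ (∑ x ∈ s, x) = 1} = N := by
    rw [Nat.card_eq_fintype_card, Fintype.card_subtype, hN]
    congr 1
    ext S
    simp [Finset.mem_powersetCard_univ, and_comm]
  -- oddness of common divisors
  have hodd' : ∀ e : ℕ, e ∣ n → e ∣ k → Odd e := by
    intro e hen hek
    by_contra he
    rw [Nat.not_odd_iff_even] at he
    have h2 : (2 : ℕ) ∣ e := he.two_dvd
    rcases hodd with h | h
    · exact (Nat.not_odd_iff_even.2 ((even_iff_two_dvd).2 (h2.trans hen))) h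
    · exact (Nat.not_odd_iff_even.2 ((even_iff_two_dvd).2 (h2.trans hek))) h
  set ξ : ℂ := Complex.exp (2 * Real.pi * Complex.I / n) with hxi
  have hξ : IsPrimitiveRoot ξ n := Complex.isPrimitiveRoot_exp n hn.ne'
  have hval : ((-1 : ZMod n)).val = n - 1 := by
    obtain ⟨m, rfl⟩ : ∃ m, n = m + 1 := ⟨n - 1, by omega⟩
    exact ZMod.val_neg_one m
  -- the key complex identity
  have key : ((N * n : ℕ) : ℂ) =
      ((∑ d ∈ (Nat.gcd n k).divisors, μ d * ((n / d).choose (k / d) : ℤ) : ℤ) : ℂ) := by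
    have step1 : ((N * n : ℕ) : ℂ) = ∑ S ∈ powersetCard k (univ : Finset (ZMod n)),
        (if (∑ x ∈ S, x) + (-1) = 0 then (n : ℂ) else 0) := by
      have hcond : ∀ S : Finset (ZMod n),
          ((∑ x ∈ S, x) + (-1) = 0) = ((∑ x ∈ S, x) = 1) := by
        intro S
        simp [add_neg_eq_zero]
      simp_rw [hcond]
      rw [← Finset.sum_filter, Finset.sum_const, ← hN, nsmul_eq_mul]
      push_cast
      ring
    have step2 : ∀ S : Finset (ZMod n),
        (if (∑ x ∈ S, x) + (-1) = 0 then (n : ℂ) else 0) =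
          ∑ j ∈ range n, (ξ ^ j) ^ (n - 1) * ∏ x ∈ S, (ξ ^ j) ^ x.val := by
      intro S
      rw [← orth hξ ((∑ x ∈ S, x) + (-1))]
      refine Finset.sum_congr rfl fun j _ => ?_
      have hzn : (ξ ^ j) ^ n = 1 := by
        rw [← pow_mul, mul_comm, pow_mul, hξ.pow_eq_one, one_pow]
      rw [chi_add hzn, chi_sum hzn, hval, mul_comm]
    have step3 : ((N * n : ℕ) : ℂ) =
        ∑ j ∈ range n, (ξ ^ j) ^ (n - 1) *
          ∑ S ∈ powersetCard k (univ : Finset (ZMod n)), ∏ x ∈ S, (ξ ^ j) ^ x.val := by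
      rw [step1, Finset.sum_congr rfl fun S _ => step2 S, Finset.sum_comm]
      exact Finset.sum_congr rfl fun j _ => (Finset.mul_sum _ _ _).symm
    -- reindex over all n-th roots of unity, then group by order
    have step4 : ((N * n : ℕ) : ℂ) =
        ∑ d ∈ n.divisors, ∑ z ∈ primitiveRoots d ℂ,
          z ^ (n - 1) * ∑ S ∈ powersetCard k (univ : Finset (ZMod n)), ∏ x ∈ S, z ^ x.val := by
      have hinj : ∀ i ∈ range n, ∀ j ∈ range n, ξ ^ i = ξ ^ j → i = j :=
        fun i hi j hj h => hξ.pow_inj (mem_range.1 hi) (mem_range.1 hj) h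
      have him := Finset.sum_image (s := range n) (g := fun j => ξ ^ j)
        (f := fun z : ℂ => z ^ (n - 1) *
          ∑ S ∈ powersetCard k (univ : Finset (ZMod n)), ∏ x ∈ S, z ^ x.val) hinj
      rw [step3, ← him, ← nthRootsFinset_eq_image hn hξ,
        IsPrimitiveRoot.nthRoots_one_eq_biUnion_primitiveRoots, Finset.sum_biUnion]
      intro a _ b _ hab
      exact IsPrimitiveRoot.disjoint hab
    rw [step4]
    have step5 : ∀ d ∈ n.divisors,
        (∑ z ∈ primitiveRoots d ℂ,
          z ^ (n - 1) * ∑ S ∈ powersetCard k (univ : Finset (ZMod n)), ∏ x ∈ S, z ^ x.val) =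
        if d ∣ k then (μ d : ℂ) * ((n / d).choose (k / d) : ℂ) else 0 := by
      intro d hd
      have hdn : d ∣ n := (Nat.mem_divisors.1 hd).1
      have hd0 : 0 < d := Nat.pos_of_mem_divisors hd
      have hinner : ∀ z ∈ primitiveRoots d ℂ,
          z ^ (n - 1) * ∑ S ∈ powersetCard k (univ : Finset (ZMod n)), ∏ x ∈ S, z ^ x.val =
          z ^ (n - 1) * (if d ∣ k then ((n / d).choose (k / d) : ℂ) else 0) := by
        intro z hz
        have hz' : IsPrimitiveRoot z d := isPrimitiveRoot_of_mem_primitiveRoots hz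
        rw [esum_eq hk hdn hd0 hz']
        by_cases hdk : d ∣ k
        · rw [if_pos hdk, if_pos hdk]
          have hdodd : Odd d := hodd' d hdn hdk
          rw [hdodd.neg_one_pow, neg_neg, one_pow, mul_one]
        · rw [if_neg hdk, if_neg hdk]
      rw [Finset.sum_congr rfl hinner, ← Finset.sum_mul, sum_pow_primitiveRoots hn hd0 hdn]
      by_cases hdk : d ∣ k
      · rw [if_pos hdk, if_pos hdk]
      · rw [if_neg hdk, if_neg hdk, mul_zero]
    rw [Finset.sum_congr rfl step5, ← Finset.sum_filter]
    have hfil : filter (· ∣ k) n.divisors = (Nat.gcd n k).divisors := by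
      ext e
      simp only [Finset.mem_filter, Nat.mem_divisors, Nat.dvd_gcd_iff]
      constructor
      · rintro ⟨⟨h1, h2⟩, h3⟩
        exact ⟨⟨h1, h3⟩, (Nat.gcd_pos_of_pos_left k hn).ne'⟩
      · rintro ⟨⟨h1, h3⟩, h2⟩
        exact ⟨⟨h1, hn.ne'⟩, h3⟩
    rw [hfil]
    push_cast
    rfl -- MAYBE
  -- transfer to ℚ
  have keyZ : ((N * n : ℕ) : ℤ) = ∑ d ∈ (Nat.gcd n k).divisors,
      μ d * ((n / d).choose (k / d) : ℤ) := by exact_mod_cast key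
  have hQ : (N : ℚ) * n = ∑ d ∈ (Nat.gcd n k).divisors,
      (μ d : ℚ) * ((n / d).choose (k / d) : ℚ) := by exact_mod_cast keyZ
  rw [hcard, ← hQ]
  have hn' : (n : ℚ) ≠ 0 := Nat.cast_ne_zero.2 hn.ne'
  field_simp
end

section
/- Let n be a positive integer, k a non-negative integer with k ≤ n and gcd(n,k) = 1, and b ∈ Z/nZ. Then the number of solutions ⟨x_1, ..., x_k⟩ ∈ (Z/nZ)^k of x_1 + ... + x_k ≡ b (mod n) with all x_i distinct modulo n equals (k!/n) · binom(n, k); in particular this count is independent of b. -/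
open Finset

/-- If `gcd(n,k) = 1`, the number of solutions of `x₁ + ⋯ + xₖ ≡ b (mod n)` with all
`xᵢ` distinct modulo `n` is `(k!/n) · C(n,k)`, independently of `b`. -/
theorem count_distinct_solutions_coprime (n : ℕ) (hn : 0 < n) (k : ℕ) (hk : k ≤ n)
    (hcop : Nat.gcd n k = 1) (b : ZMod n) :
    (Nat.card {x : Fin k → ZMod n // (∑ i, x i) = b ∧ Function.Injective x} : ℚ) =
      (Nat.factorial k : ℚ) / (n : ℚ) * (n.choose k : ℚ) := by
  haveI : NeZero n := ⟨hn.ne'⟩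
  have hu : IsUnit (k : ZMod n) := by
    rw [ZMod.isUnit_iff_coprime]
    exact Nat.coprime_comm.mp hcop
  have hsum : ∀ (c : ZMod n) (x : Fin k → ZMod n),
      ∑ i, (x i + c) = (∑ i, x i) + (k : ZMod n) * c := by
    intro c x
    rw [Finset.sum_add_distrib, Finset.sum_const, Finset.card_univ, Fintype.card_fin,
      nsmul_eq_mul]
  -- all fibers have the same cardinality
  have key : ∀ b1 b2 : ZMod n,
      Nat.card {x : Fin k → ZMod n // (∑ i, x i) = b1 ∧ Function.Injective x}
      = Nat.card {x : Fin k → ZMod n // (∑ i, x i) = b2 ∧ Function.Injective x} := by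
    intro b1 b2
    obtain ⟨u, hu'⟩ := hu
    set c : ZMod n := ↑u⁻¹ * (b2 - b1) with hc
    have hkc : (k : ZMod n) * c = b2 - b1 := by
      rw [hc, ← hu', ← mul_assoc, Units.mul_inv, one_mul]
    apply Nat.card_congr
    refine ⟨fun x => ⟨fun i => x.1 i + c, ?_, ?_⟩,
            fun x => ⟨fun i => x.1 i - c, ?_, ?_⟩, ?_, ?_⟩
    · rw [hsum, x.2.1, hkc]; ring
    · exact (add_left_injective c).comp x.2.2
    · have := hsum (-c) x.1
      simp only [← sub_eq_add_neg] at this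
      rw [this, x.2.1]
      have : (k : ZMod n) * (-c) = -(b2 - b1) := by rw [mul_neg, hkc]
      rw [mul_neg, hkc]; ring
    · exact (sub_left_injective).comp x.2.2
    · intro x; ext i; simp
    · intro x; ext i; simp
  -- total count
  have htot : Fintype.card {x : Fin k → ZMod n // Function.Injective x}
      = n.descFactorial k := by
    rw [Fintype.card_congr (Equiv.subtypeInjectiveEquivEmbedding (Fin k) (ZMod n)),
      Fintype.card_embedding_eq, ZMod.card, Fintype.card_fin]
  have hsplit : Fintype.card {x : Fin k → ZMod n // Function.Injective x}
      = ∑ b' : ZMod n,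
        Fintype.card {x : Fin k → ZMod n // (∑ i, x i) = b' ∧ Function.Injective x} := by
    rw [Fintype.card_congr
      (Equiv.sigmaFiberEquiv (fun x : {x : Fin k → ZMod n // Function.Injective x}
        => ∑ i, x.1 i)).symm, Fintype.card_sigma]
    refine Finset.sum_congr rfl fun b' _ => Fintype.card_congr ?_
    exact (Equiv.subtypeSubtypeEquivSubtypeInter
      (fun x : Fin k → ZMod n => Function.Injective x)
      (fun x => ∑ i, x i = b')).trans (Equiv.subtypeEquivRight fun x => and_comm)
  have hconst : ∑ b' : ZMod n,
      Fintype.card {x : Fin k → ZMod n // (∑ i, x i) = b' ∧ Function.Injective x}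
      = n * Nat.card {x : Fin k → ZMod n // (∑ i, x i) = b ∧ Function.Injective x} := by
    rw [Finset.sum_congr rfl fun b' _ => ?_, Finset.sum_const, Finset.card_univ,
      ZMod.card, smul_eq_mul]
    rw [← Nat.card_eq_fintype_card, key b' b]
  have hn' : n * Nat.card {x : Fin k → ZMod n // (∑ i, x i) = b ∧ Function.Injective x}
      = n.descFactorial k := by rw [← hconst, ← hsplit, htot]
  have hq : (n : ℚ) * (Nat.card {x : Fin k → ZMod n // (∑ i, x i) = b ∧ Function.Injective x} : ℚ)
      = (n.descFactorial k : ℚ) := by exact_mod_cast congrArg (Nat.cast (R := ℚ)) hn'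
  have hnq : (n : ℚ) ≠ 0 := Nat.cast_ne_zero.mpr hn.ne'
  rw [Nat.card_eq_fintype_card] at hq
  field_simp
  rw [Nat.card_eq_fintype_card, mul_comm, hq, Nat.descFactorial_eq_factorial_mul_choose]
  push_cast
  ring
end

section
/- Let k be a non-negative integer, n = 2k+1, and b ∈ Z/nZ. Then the number of k-element subsets of Z/nZ whose elements sum to b in Z/nZ equals the Catalan number (1/(k+1)) · binom(2k, k). -/
open Finset

lemma aux_card_eq (k : ℕ) (b b' : ZMod (2 * k + 1)) :
    (Finset.univ.filter
      (fun s : Finset (ZMod (2 * k + 1)) => s.card = k ∧ (∑ x ∈ s, x) = b)).card =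
    (Finset.univ.filter
      (fun s : Finset (ZMod (2 * k + 1)) => s.card = k ∧ (∑ x ∈ s, x) = b')).card := by
  have hk : (k : ZMod (2 * k + 1)) * (-2) = 1 := by
    have h : ((2 * k + 1 : ℕ) : ZMod (2 * k + 1)) = 0 := ZMod.natCast_self _
    push_cast at h
    linear_combination -h
  set c : ZMod (2 * k + 1) := (b' - b) * (-2) with hc
  have hinj : Function.Injective (fun x : ZMod (2 * k + 1) => x + c) :=
    add_left_injective c
  apply Finset.card_bij (fun s _ => s.image (fun x => x + c))
  · intro s hs
    simp only [Finset.mem_filter, Finset.mem_univ, true_and] at hs ⊢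
    obtain ⟨hcard, hsum⟩ := hs
    constructor
    · rw [Finset.card_image_of_injective _ hinj, hcard]
    · rw [Finset.sum_image (fun x _ y _ h => hinj h), Finset.sum_add_distrib, hsum,
        Finset.sum_const, hcard, nsmul_eq_mul, hc]
      have : (k : ZMod (2 * k + 1)) * ((b' - b) * (-2)) = b' - b := by
        rw [show (k : ZMod (2 * k + 1)) * ((b' - b) * (-2)) = ((k : ZMod (2 * k + 1)) * (-2)) * (b' - b) by ring, hk, one_mul]
      rw [this]; ring
  · intro s hs t ht h
    exact Finset.image_injective hinj h
  · intro s hs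
    simp only [Finset.mem_filter, Finset.mem_univ, true_and] at hs
    obtain ⟨hcard, hsum⟩ := hs
    refine ⟨s.image (fun x => x + (-c)), ?_, ?_⟩
    · simp only [Finset.mem_filter, Finset.mem_univ, true_and]
      have hinj' : Function.Injective (fun x : ZMod (2 * k + 1) => x + (-c)) :=
        add_left_injective _
      constructor
      · rw [Finset.card_image_of_injective _ hinj', hcard]
      · rw [Finset.sum_image (fun x _ y _ h => hinj' h), Finset.sum_add_distrib, hsum,
          Finset.sum_const, hcard, nsmul_eq_mul, hc]
        have : (k : ZMod (2 * k + 1)) * ((b' - b) * (-2)) = b' - b := by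
          rw [show (k : ZMod (2 * k + 1)) * ((b' - b) * (-2)) = ((k : ZMod (2 * k + 1)) * (-2)) * (b' - b) by ring, hk, one_mul]
        rw [show (k : ZMod (2*k+1)) * -((b' - b)*(-2)) = -((k : ZMod (2*k+1)) * ((b' - b)*(-2))) by ring, this]
        ring
    · rw [Finset.image_image]
      simp [Function.comp]

/-- For `n = 2k+1`, the number of `k`-subsets of `ℤ/nℤ` summing to any fixed `b` is the
Catalan number `(1/(k+1)) · C(2k, k)`. -/
theorem count_subsets_catalan (k : ℕ) (b : ZMod (2 * k + 1)) :
    (Nat.card {s : Finset (ZMod (2 * k + 1)) // s.card = k ∧ (∑ x ∈ s, x) = b} : ℚ) =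
      (1 / (k + 1) : ℚ) * ((2 * k).choose k : ℚ) := by
  set N : ℕ := (Finset.univ.filter
      (fun s : Finset (ZMod (2 * k + 1)) => s.card = k ∧ (∑ x ∈ s, x) = b)).card with hN
  have hcard : Nat.card {s : Finset (ZMod (2 * k + 1)) // s.card = k ∧ (∑ x ∈ s, x) = b} = N := by
    rw [Nat.card_eq_fintype_card, Fintype.card_subtype]
  -- partition: sum over all b' of fiber counts = choose (2k+1) k
  have hpart : (2 * k + 1) * N = (2 * k + 1).choose k := by
    have h1 : (Finset.univ.filter (fun s : Finset (ZMod (2 * k + 1)) => s.card = k)).card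
        = ∑ b' : ZMod (2 * k + 1), (Finset.univ.filter
            (fun s : Finset (ZMod (2 * k + 1)) => s.card = k ∧ (∑ x ∈ s, x) = b')).card := by
      rw [Finset.card_eq_sum_card_fiberwise
        (f := fun s : Finset (ZMod (2 * k + 1)) => ∑ x ∈ s, x) (t := Finset.univ)
        (fun x _ => Finset.mem_univ _)]
      refine Finset.sum_congr rfl fun b' _ => ?_
      rw [Finset.filter_filter]
    have h2 : ∀ b' : ZMod (2 * k + 1), (Finset.univ.filter
        (fun s : Finset (ZMod (2 * k + 1)) => s.card = k ∧ (∑ x ∈ s, x) = b')).card = N :=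
      fun b' => (aux_card_eq k b' b)
    have h3 : (Finset.univ.filter (fun s : Finset (ZMod (2 * k + 1)) => s.card = k)).card
        = (2 * k + 1).choose k := by
      have : Finset.univ.filter (fun s : Finset (ZMod (2 * k + 1)) => s.card = k)
          = Finset.powersetCard k Finset.univ := by
        rw [Finset.powersetCard_eq_filter, Finset.powerset_univ]
      rw [this, Finset.card_powersetCard, Finset.card_univ, ZMod.card]
    rw [h3] at h1
    rw [h1]
    simp [h2, Finset.sum_const, Finset.card_univ, ZMod.card, mul_comm]
  have hchoose : (2 * k + 1) * (2 * k).choose k = (k + 1) * (2 * k + 1).choose k := by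
    have h := Nat.add_one_mul_choose_eq (2 * k) k
    have hsymm : (2 * k + 1).choose (k + 1) = (2 * k + 1).choose k := by
      have hs := Nat.choose_symm (n := 2 * k + 1) (k := k + 1) (by omega)
      have heq : 2 * k + 1 - (k + 1) = k := by omega
      rw [heq] at hs
      exact hs.symm
    rw [hsymm] at h
    rw [h, mul_comm]
  rw [hcard]
  have hk1 : ((k : ℚ) + 1) ≠ 0 := by positivity
  have hn : ((2 * (k:ℚ) + 1)) ≠ 0 := by positivity
  have e1 : (2 * (k:ℚ) + 1) * N = ((2 * k + 1).choose k : ℚ) := by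
    exact_mod_cast congrArg (fun m : ℕ => (m : ℚ)) hpart
  have e2 : (2 * (k:ℚ) + 1) * ((2 * k).choose k : ℚ) = ((k:ℚ) + 1) * ((2 * k + 1).choose k : ℚ) := by
    exact_mod_cast congrArg (fun m : ℕ => (m : ℚ)) hchoose
  have key : ((k:ℚ) + 1) * N = ((2 * k).choose k : ℚ) := by
    have h3 : (2 * (k:ℚ) + 1) * (((k:ℚ) + 1) * N) = (2 * (k:ℚ) + 1) * ((2 * k).choose k : ℚ) := by
      calc (2 * (k:ℚ) + 1) * (((k:ℚ) + 1) * N) = ((k:ℚ) + 1) * ((2 * (k:ℚ) + 1) * N) := by ring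
        _ = ((k:ℚ) + 1) * ((2 * k + 1).choose k : ℚ) := by rw [e1]
        _ = (2 * (k:ℚ) + 1) * ((2 * k).choose k : ℚ) := e2.symm
    exact mul_left_cancel₀ hn h3
  field_simp
  linarith [key]
end
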